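/- The projection operator on contexts is natural with respect to lens action: for lenses λ₁ : (X₁,S₁) → (X₁',S₁'), λ₂ : (X₂,S₂) → (X₂',S₂'), μ₂ : (X₂',S₂') → (Y₂',R₂'), ν₁ : (Y₁',R₁') → (Y₁,R₁), ν₂ : (Y₂',R₂') → (Y₂,R₂), and every context κ = ((h₁,h₂), k) with h₁ : X₁, h₂ : X₂ and k : Y₁ × Y₂ → R₂ × R₁, one has L(λ₁,ν₁)( (ν₂∘μ₂∘λ₂) / κ ) = μ₂ / ( L(λ₁⊗λ₂, ν₁⊗ν₂)(κ) ) as contexts for ((X₁',S₁'),(Y₁',R₁')). -/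
import Mathlib


universe u

/-- A lens `(X,S) → (Y,R)` between types. -/
structure Lens (X S Y R : Type u) where
  v : X → Y
  u : X × R → S

/-- Composition of lenses (diagrammatic order: `l.comp m` is `m ∘ l`). -/
def Lens.comp {X S Y R Z Q : Type u} (l : Lens X S Y R) (m : Lens Y R Z Q) :
    Lens X S Z Q where
  v x := m.v (l.v x)
  u p := l.u (p.1, m.u (l.v p.1, p.2))

/-- The identity lens on `(X,S)`. -/
def Lens.id (X S : Type u) : Lens X S X S where
  v x := x
  u p := p.2

/-- The tensor of lenses. -/
def Lens.tensor {X₁ S₁ Y₁ R₁ X₂ S₂ Y₂ R₂ : Type u}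
    (l : Lens X₁ S₁ Y₁ R₁) (m : Lens X₂ S₂ Y₂ R₂) :
    Lens (X₁ × X₂) (S₂ × S₁) (Y₁ × Y₂) (R₂ × R₁) where
  v x := (l.v x.1, m.v x.2)
  u p := (m.u (p.1.2, p.2.1), l.u (p.1.1, p.2.2))

/-- Transport of a context `(h,k)` for `((X,S),(Y,R))` along lenses
`l : (X,S) → (X',S')` and `n : (Y',R') → (Y,R)`, yielding a context for
`((X',S'),(Y',R'))`. -/
def transport {X S X' S' Y R Y' R' : Type u}
    (l : Lens X S X' S') (n : Lens Y' R' Y R)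
    (c : X × (Y → R)) : X' × (Y' → R') :=
  (l.v c.1, fun y' => n.u (y', c.2 (n.v y')))

/-- Projection `μ / κ` of a context for a tensor onto the left factor. -/
def proj {X₁ S₁ Y₁ R₁ X₂ S₂ Y₂ R₂ : Type u} (m : Lens X₂ S₂ Y₂ R₂)
    (c : (X₁ × X₂) × (Y₁ × Y₂ → R₂ × R₁)) : X₁ × (Y₁ → R₁) :=
  (c.1.1, fun y₁ => (c.2 (y₁, m.v c.1.2)).2)

/-- Naturality of the projection operator with respect to the lens action
on contexts: `L(λ₁,ν₁)((ν₂∘μ₂∘λ₂)/κ) = μ₂/(L(λ₁⊗λ₂, ν₁⊗ν₂)(κ))`. -/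
theorem proj_natural {X₁ S₁ X₁' S₁' X₂ S₂ X₂' S₂' Y₁ R₁ Y₁' R₁' Y₂ R₂ Y₂' R₂' : Type u}
    (l₁ : Lens X₁ S₁ X₁' S₁') (l₂ : Lens X₂ S₂ X₂' S₂')
    (m₂ : Lens X₂' S₂' Y₂' R₂')
    (n₁ : Lens Y₁' R₁' Y₁ R₁) (n₂ : Lens Y₂' R₂' Y₂ R₂)
    (h₁ : X₁) (h₂ : X₂) (k : Y₁ × Y₂ → R₂ × R₁) :
    transport l₁ n₁ (proj (S₁ := S₁) ((l₂.comp m₂).comp n₂) ((h₁, h₂), k))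
      = proj (S₁ := S₁') m₂ (transport (l₁.tensor l₂) (n₁.tensor n₂) ((h₁, h₂), k)) := by
  rfl
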